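/- arXiv:2211.09298 — 13 statements merged into one kernel-verified Lean document; each statement's English description precedes it below -/
import Mathlib

section
/- Suppose a₁, a₂, c₁, c₂, c₃, c₄ > 0, N₀ = M₀ + W₁ + W₂, and conditions (I₁) and (I₂) hold. Then the vector given by u₁* = M₀a₂/(a₁+a₂), u₂* = M₀a₁/(a₁+a₂), v₁* = (a₂(c₂−a₁)M₀ + c₂(a₁+a₂)W₁)/((a₁+a₂)(c₁+c₂)), v₂* = (a₂(a₁+c₁)M₀ + c₁(a₁+a₂)W₁)/((a₁+a₂)(c₁+c₂)), v₃* = (a₂(a₁−c₄)M₀ + c₄(a₁+a₂)(N₀−W₁))/((a₁+a₂)(c₃+c₄)), v₄* = (−a₂(a₁+c₃)M₀ + c₃(a₁+a₂)(N₀−W₁))/((a₁+a₂)(c₃+c₄)) satisfies u₁* < v₁* and u₂* < v₄*, and is a constant equilibrium. -/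
/-- A constant equilibrium of the conservative reaction-diffusion system. -/
def IsConstantEquilibrium (a1 a2 c1 c2 c3 c4 M0 N0 W1 W2 u1 u2 v1 v2 v3 v4 : ℝ) : Prop :=
  (-a1 * min u1 v1 + a2 * min u2 v4 = 0) ∧
  (a1 * min u1 v1 - a2 * min u2 v4 = 0) ∧
  (-a1 * min u1 v1 - c1 * v1 + c2 * v2 = 0) ∧
  (-c2 * v2 + c1 * v1 + a2 * min u2 v4 = 0) ∧
  (-c3 * v3 + c4 * v4 + a1 * min u1 v1 = 0) ∧
  (-a2 * min u2 v4 - c4 * v4 + c3 * v3 = 0) ∧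
  (u1 + u2 = M0) ∧ (v1 + v2 + v3 + v4 = N0) ∧
  (v1 + v2 - u1 = W1) ∧ (v3 + v4 - u2 = W2)

theorem equilibrium_Q1_dominates (a1 a2 c1 c2 c3 c4 M0 N0 W1 W2 : ℝ)
    (ha1 : 0 < a1) (ha2 : 0 < a2) (hc1 : 0 < c1) (hc2 : 0 < c2)
    (hc3 : 0 < c3) (hc4 : 0 < c4)
    (hN : N0 = M0 + W1 + W2)
    (hI1 : a2 * (a1 + c1) * M0 < c2 * (a1 + a2) * W1)
    (hI2 : a1 * (a2 + c4) * M0 < c3 * (a1 + a2) * W2)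
    (u1 u2 v1 v2 v3 v4 : ℝ)
    (hu1 : u1 = M0 * a2 / (a1 + a2))
    (hu2 : u2 = M0 * a1 / (a1 + a2))
    (hv1 : v1 = (a2 * (c2 - a1) * M0 + c2 * (a1 + a2) * W1) / ((a1 + a2) * (c1 + c2)))
    (hv2 : v2 = (a2 * (a1 + c1) * M0 + c1 * (a1 + a2) * W1) / ((a1 + a2) * (c1 + c2)))
    (hv3 : v3 = (a2 * (a1 - c4) * M0 + c4 * (a1 + a2) * (N0 - W1)) / ((a1 + a2) * (c3 + c4)))
    (hv4 : v4 = (-a2 * (a1 + c3) * M0 + c3 * (a1 + a2) * (N0 - W1)) / ((a1 + a2) * (c3 + c4))) :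
    u1 < v1 ∧ u2 < v4 ∧
      IsConstantEquilibrium a1 a2 c1 c2 c3 c4 M0 N0 W1 W2 u1 u2 v1 v2 v3 v4 := by
  subst hN hu1 hu2 hv1 hv2 hv3 hv4
  have hA : (0:ℝ) < a1 + a2 := by linarith
  have hB : (0:ℝ) < c1 + c2 := by linarith
  have hC : (0:ℝ) < c3 + c4 := by linarith
  have h1 : M0 * a2 / (a1 + a2) <
      (a2 * (c2 - a1) * M0 + c2 * (a1 + a2) * W1) / ((a1 + a2) * (c1 + c2)) := by
    rw [div_lt_div_iff₀ hA (by positivity)]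
    nlinarith [mul_pos hA hB]
  have h2 : M0 * a1 / (a1 + a2) <
      (-a2 * (a1 + c3) * M0 + c3 * (a1 + a2) * (M0 + W1 + W2 - W1)) / ((a1 + a2) * (c3 + c4)) := by
    rw [div_lt_div_iff₀ hA (by positivity)]
    nlinarith [mul_pos hA hC, mul_pos hA (sub_pos.mpr hI2)]
  have hm1 := min_eq_left h1.le
  have hm2 := min_eq_left h2.le
  refine ⟨h1, h2, ?_, ?_, ?_, ?_, ?_, ?_, ?_, ?_, ?_, ?_⟩ <;>
    (try simp only [hm1, hm2]) <;> field_simp <;> ring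
end

section
/- Suppose a₁, a₂, c₁, c₂, c₃, c₄ > 0. If (u₁, u₂, v₁, v₂, v₃, v₄) ∈ ℝ⁶ is a constant equilibrium satisfying u₁ ≤ v₁ and u₂ ≤ v₄, then u₁ = M₀a₂/(a₁+a₂), u₂ = M₀a₁/(a₁+a₂), v₁ = (a₂(c₂−a₁)M₀ + c₂(a₁+a₂)W₁)/((a₁+a₂)(c₁+c₂)), v₂ = (a₂(a₁+c₁)M₀ + c₁(a₁+a₂)W₁)/((a₁+a₂)(c₁+c₂)), v₃ = (a₂(a₁−c₄)M₀ + c₄(a₁+a₂)(N₀−W₁))/((a₁+a₂)(c₃+c₄)), v₄ = (−a₂(a₁+c₃)M₀ + c₃(a₁+a₂)(N₀−W₁))/((a₁+a₂)(c₃+c₄)). In particular, there is at most one constant equilibrium with u₁ ≤ v₁ and u₂ ≤ v₄. -/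
theorem equilibrium_Q1_unique (a1 a2 c1 c2 c3 c4 M0 N0 W1 W2 : ℝ)
    (ha1 : 0 < a1) (ha2 : 0 < a2) (hc1 : 0 < c1) (hc2 : 0 < c2)
    (hc3 : 0 < c3) (hc4 : 0 < c4)
    (u1 u2 v1 v2 v3 v4 : ℝ)
    (heq : IsConstantEquilibrium a1 a2 c1 c2 c3 c4 M0 N0 W1 W2 u1 u2 v1 v2 v3 v4)
    (h1 : u1 ≤ v1) (h2 : u2 ≤ v4) :
    u1 = M0 * a2 / (a1 + a2) ∧
    u2 = M0 * a1 / (a1 + a2) ∧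
    v1 = (a2 * (c2 - a1) * M0 + c2 * (a1 + a2) * W1) / ((a1 + a2) * (c1 + c2)) ∧
    v2 = (a2 * (a1 + c1) * M0 + c1 * (a1 + a2) * W1) / ((a1 + a2) * (c1 + c2)) ∧
    v3 = (a2 * (a1 - c4) * M0 + c4 * (a1 + a2) * (N0 - W1)) / ((a1 + a2) * (c3 + c4)) ∧
    v4 = (-a2 * (a1 + c3) * M0 + c3 * (a1 + a2) * (N0 - W1)) / ((a1 + a2) * (c3 + c4)) := by
  obtain ⟨e1, e2, e3, e4, e5, e6, e7, e8, e9, e10⟩ := heq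
  simp only [min_eq_left h1, min_eq_left h2] at e1 e2 e3 e4 e5 e6
  have hA : a1 + a2 ≠ 0 := by positivity
  have hB : (a1 + a2) * (c1 + c2) ≠ 0 := by positivity
  have hC : (a1 + a2) * (c3 + c4) ≠ 0 := by positivity
  refine ⟨?_, ?_, ?_, ?_, ?_, ?_⟩
  · rw [eq_div_iff hA]; linear_combination a2 * e7 - e1
  · rw [eq_div_iff hA]; linear_combination a1 * e7 + e1
  · rw [eq_div_iff hB]
    linear_combination (a1 + a2) * (c2 * e9 - e3) + (c2 - a1) * (a2 * e7 - e1)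
  · rw [eq_div_iff hB]
    linear_combination (a1 + a2) * (c1 * e9 + e3) + (c1 + a1) * (a2 * e7 - e1)
  · rw [eq_div_iff hC]
    linear_combination (a1 + a2) * (c4 * e8 - c4 * e9 + e6) - c4 * (a2 * e7 - e1) +
      a2 * (a1 * e7 + e1)
  · rw [eq_div_iff hC]
    linear_combination (a1 + a2) * (c3 * e8 - c3 * e9 - e6) - c3 * (a2 * e7 - e1) -
      a2 * (a1 * e7 + e1)
end

section
/- Suppose a₁, a₂, c₁, c₂, c₃, c₄ > 0, N₀ = M₀ + W₁ + W₂, and conditions (I₃) and (I₂ᶜ) hold. Then the vector given by u₁* = (a₂c₃/D₂)(M₀+W₂), u₂* = (1 − a₂c₃/D₂)M₀ − (a₂c₃/D₂)W₂, v₁* = (c₂/(c₁+c₂))N₀ − ((a₁c₂(a₂+c₃+c₄)+a₁a₂c₃)/(D₂(c₁+c₂)))(M₀+W₂), v₂* = (c₁/(c₁+c₂))N₀ − ((a₁c₁(a₂+c₃+c₄)−a₁a₂c₃)/(D₂(c₁+c₂)))(M₀+W₂), v₃* = (a₁(a₂+c₄)/D₂)(M₀+W₂), v₄* = (a₁c₃/D₂)(M₀+W₂)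 satisfies u₁* < v₁* and u₂* ≥ v₄*, and is a constant equilibrium. -/
set_option maxHeartbeats 1000000 in
theorem equilibrium_Q2_dominates (a1 a2 c1 c2 c3 c4 M0 N0 W1 W2 : ℝ)
    (ha1 : 0 < a1) (ha2 : 0 < a2) (hc1 : 0 < c1) (hc2 : 0 < c2)
    (hc3 : 0 < c3) (hc4 : 0 < c4)
    (D1 D2 : ℝ)
    (hN : N0 = M0 + W1 + W2)
    (hD1 : D1 = a1 * c2 * (a2 + c4) + a2 * c3 * (a1 + c1) + c2 * c3 * (a1 + a2))
    (hD2 : D2 = a1 * (a2 + c3 + c4) + a2 * c3)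
    (hI3 : a2 * c3 * (a1 + c1) * N0 < D1 * W1)
    (hI2c : a1 * (a2 + c4) * M0 ≥ c3 * (a1 + a2) * W2)
    (u1 u2 v1 v2 v3 v4 : ℝ)
    (hu1 : u1 = (a2 * c3 / D2) * (M0 + W2))
    (hu2 : u2 = (1 - a2 * c3 / D2) * M0 - (a2 * c3 / D2) * W2)
    (hv1 : v1 = (c2 / (c1 + c2)) * N0 - ((a1 * c2 * (a2 + c3 + c4) + a1 * a2 * c3) / (D2 * (c1 + c2))) * (M0 + W2))
    (hv2 : v2 = (c1 / (c1 + c2)) * N0 - ((a1 * c1 * (a2 + c3 + c4) - a1 * a2 * c3) / (D2 * (c1 + c2))) * (M0 + W2))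
    (hv3 : v3 = (a1 * (a2 + c4) / D2) * (M0 + W2))
    (hv4 : v4 = (a1 * c3 / D2) * (M0 + W2)) :
    u1 < v1 ∧ u2 ≥ v4 ∧
      IsConstantEquilibrium a1 a2 c1 c2 c3 c4 M0 N0 W1 W2 u1 u2 v1 v2 v3 v4 := by
  have hD2pos : 0 < D2 := by rw [hD2]; positivity
  have hD2ne : D2 ≠ 0 := ne_of_gt hD2pos
  have hc12 : 0 < c1 + c2 := by positivity
  have hc12ne : (c1 + c2) ≠ 0 := ne_of_gt hc12
  have hdiff1 : v1 - u1 = (c2 * D2 * W1 - a2 * c3 * (a1 + c1) * (M0 + W2)) / (D2 * (c1 + c2)) := by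
    rw [hv1, hu1, hN, hD2]
    field_simp
    ring
  have hkey1 : a2 * c3 * (a1 + c1) * (M0 + W2) < c2 * D2 * W1 := by
    rw [hN] at hI3
    have hid : D1 * W1 - a2 * c3 * (a1 + c1) * W1 = c2 * D2 * W1 := by
      rw [hD1, hD2]; ring
    have hsplit : a2 * c3 * (a1 + c1) * (M0 + W1 + W2)
        = a2 * c3 * (a1 + c1) * (M0 + W2) + a2 * c3 * (a1 + c1) * W1 := by ring
    linarith
  have h1 : u1 < v1 := by
    have : 0 < v1 - u1 := by
      rw [hdiff1]
      apply div_pos (by linarith) (by positivity)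
    linarith
  have hdiff2 : u2 - v4 = (a1 * (a2 + c4) * M0 - c3 * (a1 + a2) * W2) / D2 := by
    rw [hu2, hv4, hD2]
    field_simp
    ring
  have h2 : u2 ≥ v4 := by
    have : 0 ≤ u2 - v4 := by
      rw [hdiff2]
      apply div_nonneg (by linarith) (le_of_lt hD2pos)
    linarith
  refine ⟨h1, h2, ?_⟩
  have hm1 : min u1 v1 = u1 := min_eq_left (le_of_lt h1)
  have hm2 : min u2 v4 = v4 := min_eq_right h2
  have hmain : a1 * u1 = a2 * v4 := by
    rw [hu1, hv4]; field_simp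
  constructor
  · rw [hm1, hm2]; linarith
  constructor
  · rw [hm1, hm2]; linarith
  constructor
  · rw [hm1, hu1, hv1, hv2, hN]; field_simp; ring
  constructor
  · rw [hm2, hv4, hv1, hv2, hN]; field_simp; ring
  constructor
  · rw [hm1, hu1, hv3, hv4]; field_simp; ring
  constructor
  · rw [hm2, hv4, hv3]; field_simp; ring
  constructor
  · rw [hu1, hu2]; field_simp; ring
  constructor
  · rw [hv1, hv2, hv3, hv4, hN]; field_simp; ring
  constructor
  · rw [hv1, hv2, hu1, hN, hD2]; field_simp; ring
  · rw [hv3, hv4, hu2, hD2]; field_simp; ring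
end

section
/- Suppose a₁, a₂, c₁, c₂, c₃, c₄ > 0. If (u₁, u₂, v₁, v₂, v₃, v₄) ∈ ℝ⁶ is a constant equilibrium satisfying u₁ ≤ v₁ and u₂ ≥ v₄, then u₁ = (a₂c₃/D₂)(M₀+W₂), u₂ = M₀ − (a₂c₃/D₂)(M₀+W₂), v₁ = (c₂/(c₁+c₂))N₀ − ((a₁c₂(a₂+c₃+c₄)+a₁a₂c₃)/(D₂(c₁+c₂)))(M₀+W₂), v₂ = (c₁/(c₁+c₂))N₀ − ((a₁c₁(a₂+c₃+c₄)−a₁a₂c₃)/(D₂(c₁+c₂)))(M₀+W₂), v₃ = (a₁(a₂+c₄)/D₂)(M₀+W₂), v₄ = (a₁c₃/D₂)(M₀+W₂). In particular, there is at most one constant equilibrium with u₁ ≤ v₁ and u₂ ≥ v₄. -/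
section LinearSystem

variable {K : Type*} [Field K]

theorem flux_balance_eq {a1 a2 c3 c4 D T u v w : K} (ha1 : a1 ≠ 0) (hc3 : c3 ≠ 0)
    (hD : D = a1 * (a2 + c3 + c4) + a2 * c3) (hD0 : D ≠ 0)
    (hflux : a1 * u = a2 * w) (hexch : c3 * v = c4 * w + a1 * u) (hmass : u + v + w = T) :
    u = a2 * c3 / D * T ∧ v = a1 * (a2 + c4) / D * T ∧ w = a1 * c3 / D * T := by
  have hw : D * w = a1 * c3 * T := by
    subst hD; linear_combination -(a1 + c3) * hflux - a1 * hexch + a1 * c3 * hmass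
  have hu : a1 * (D * u) = a1 * (a2 * c3 * T) := by
    linear_combination D * hflux + a2 * hw
  have hv : c3 * (D * v) = c3 * (a1 * (a2 + c4) * T) := by
    linear_combination D * hexch + D * hflux + (a2 + c4) * hw
  refine ⟨?_, ?_, ?_⟩
  · rw [div_mul_eq_mul_div, eq_div_iff hD0, mul_comm]
    exact mul_left_cancel₀ ha1 hu
  · rw [div_mul_eq_mul_div, eq_div_iff hD0, mul_comm]
    exact mul_left_cancel₀ hc3 hv
  · rw [div_mul_eq_mul_div, eq_div_iff hD0, mul_comm, hw]

theorem exchange_pair_eq {c1 c2 f S x y : K} (hc : c1 + c2 ≠ 0)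
    (hexch : c1 * x - c2 * y = -f) (hsum : x + y = S) :
    x = (c2 * S - f) / (c1 + c2) ∧ y = (c1 * S + f) / (c1 + c2) := by
  constructor
  · rw [eq_div_iff hc]; linear_combination hexch + c2 * hsum
  · rw [eq_div_iff hc]; linear_combination c1 * hsum - hexch

end LinearSystem

theorem IsConstantEquilibrium.linear_of_le
    {a1 a2 c1 c2 c3 c4 M0 N0 W1 W2 u1 u2 v1 v2 v3 v4 : ℝ}
    (heq : IsConstantEquilibrium a1 a2 c1 c2 c3 c4 M0 N0 W1 W2 u1 u2 v1 v2 v3 v4)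
    (h1 : u1 ≤ v1) (h2 : v4 ≤ u2) :
    a1 * u1 = a2 * v4 ∧ c3 * v3 = c4 * v4 + a1 * u1 ∧ u1 + v3 + v4 = M0 + W2 ∧
      c1 * v1 - c2 * v2 = -(a1 * u1) ∧ v1 + v2 = N0 - v3 - v4 ∧ u1 + u2 = M0 := by
  obtain ⟨e1, -, e3, -, e5, -, e7, e8, -, e10⟩ := heq
  simp only [min_eq_left h1, min_eq_right h2] at e1 e3 e5
  refine ⟨?_, ?_, ?_, ?_, ?_, e7⟩ <;> linarith

theorem equilibrium_Q2_unique (a1 a2 c1 c2 c3 c4 M0 N0 W1 W2 : ℝ)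
    (ha1 : 0 < a1) (ha2 : 0 < a2) (hc1 : 0 < c1) (hc2 : 0 < c2)
    (hc3 : 0 < c3) (hc4 : 0 < c4)
    (D2 : ℝ)
    (hD2 : D2 = a1 * (a2 + c3 + c4) + a2 * c3)
    (u1 u2 v1 v2 v3 v4 : ℝ)
    (heq : IsConstantEquilibrium a1 a2 c1 c2 c3 c4 M0 N0 W1 W2 u1 u2 v1 v2 v3 v4)
    (h1 : u1 ≤ v1) (h2 : u2 ≥ v4) :
    u1 = (a2 * c3 / D2) * (M0 + W2) ∧
    u2 = M0 - (a2 * c3 / D2) * (M0 + W2) ∧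
    v1 = (c2 / (c1 + c2)) * N0 - ((a1 * c2 * (a2 + c3 + c4) + a1 * a2 * c3) / (D2 * (c1 + c2))) * (M0 + W2) ∧
    v2 = (c1 / (c1 + c2)) * N0 - ((a1 * c1 * (a2 + c3 + c4) - a1 * a2 * c3) / (D2 * (c1 + c2))) * (M0 + W2) ∧
    v3 = (a1 * (a2 + c4) / D2) * (M0 + W2) ∧
    v4 = (a1 * c3 / D2) * (M0 + W2) := by
  obtain ⟨hflux, hexch34, hmass, hexch12, hsum, hM⟩ := heq.linear_of_le h1 h2
  have hD2pos : 0 < D2 := by rw [hD2]; positivity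
  obtain ⟨rfl, rfl, rfl⟩ :=
    flux_balance_eq ha1.ne' hc3.ne' hD2 hD2pos.ne' hflux hexch34 hmass
  obtain ⟨rfl, rfl⟩ := exchange_pair_eq (by positivity) hexch12 hsum
  refine ⟨rfl, by linear_combination hM, ?_, ?_, rfl, rfl⟩
  · field_simp
    ring
  · field_simp
    ring
end

section
/- Suppose a₁, a₂, c₁, c₂, c₃, c₄ > 0, N₀ = M₀ + W₁ + W₂, and conditions (I₄) and (I₁ᶜ) hold. Then the vector given by u₁* = (1 − a₁c₂/D₃)M₀ − (a₁c₂/D₃)W₁, u₂* = (a₁c₂/D₃)(M₀+W₁), v₁* = (a₂c₂/D₃)(M₀+W₁), v₂* = (a₂(a₁+c₁)/D₃)(M₀+W₁), v₃* = (c₄/(c₃+c₄))N₀ − ((a₂c₄(a₁+c₁+c₂)−a₁a₂c₂)/(D₃(c₃+c₄)))(M₀+W₁), v₄* = (c₃/(c₃+c₄))N₀ − ((a₂c₃(a₁+c₁+c₂)+a₁a₂c₂)/(D₃(c₃+c₄)))(M₀+W₁) satisfies u₁* ≥ v₁* and u₂* < v₄*, and is a constant equilibrium. -/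
set_option maxHeartbeats 1000000 in
theorem equilibrium_Q3_dominates (a1 a2 c1 c2 c3 c4 M0 N0 W1 W2 : ℝ)
    (ha1 : 0 < a1) (ha2 : 0 < a2) (hc1 : 0 < c1) (hc2 : 0 < c2)
    (hc3 : 0 < c3) (hc4 : 0 < c4)
    (D1 D3 : ℝ)
    (hN : N0 = M0 + W1 + W2)
    (hD1 : D1 = a1 * c2 * (a2 + c4) + a2 * c3 * (a1 + c1) + c2 * c3 * (a1 + a2))
    (hD3 : D3 = a2 * (a1 + c1 + c2) + a1 * c2)
    (hI4 : a1 * c2 * (a2 + c4) * N0 < D1 * W2)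
    (hI1c : a2 * (a1 + c1) * M0 ≥ c2 * (a1 + a2) * W1)
    (u1 u2 v1 v2 v3 v4 : ℝ)
    (hu1 : u1 = (1 - a1 * c2 / D3) * M0 - (a1 * c2 / D3) * W1)
    (hu2 : u2 = (a1 * c2 / D3) * (M0 + W1))
    (hv1 : v1 = (a2 * c2 / D3) * (M0 + W1))
    (hv2 : v2 = (a2 * (a1 + c1) / D3) * (M0 + W1))
    (hv3 : v3 = (c4 / (c3 + c4)) * N0 - ((a2 * c4 * (a1 + c1 + c2) - a1 * a2 * c2) / (D3 * (c3 + c4))) * (M0 + W1))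
    (hv4 : v4 = (c3 / (c3 + c4)) * N0 - ((a2 * c3 * (a1 + c1 + c2) + a1 * a2 * c2) / (D3 * (c3 + c4))) * (M0 + W1)) :
    u1 ≥ v1 ∧ u2 < v4 ∧
      IsConstantEquilibrium a1 a2 c1 c2 c3 c4 M0 N0 W1 W2 u1 u2 v1 v2 v3 v4 := by
  have hD3pos : 0 < D3 := by rw [hD3]; positivity
  have hcc : 0 < c3 + c4 := by positivity
  have hD3ne : D3 ≠ 0 := ne_of_gt hD3pos
  have hccne : (c3 + c4) ≠ 0 := ne_of_gt hcc
  have key1 : D3 * (u1 - v1) = a2 * (a1 + c1) * M0 - c2 * (a1 + a2) * W1 := by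
    rw [hu1, hv1, hD3]; field_simp; ring
  have hge : u1 ≥ v1 := by nlinarith [key1]
  have key2 : D3 * (c3 + c4) * (v4 - u2) = D1 * W2 - a1 * c2 * (a2 + c4) * N0 := by
    rw [hv4, hu2, hD3, hD1, hN]; field_simp; ring
  have hlt : u2 < v4 := by
    by_contra h
    push_neg at h
    have hp : 0 < D3 * (c3 + c4) := mul_pos hD3pos hcc
    nlinarith [key2]
  have hmin1 : min u1 v1 = v1 := min_eq_right hge
  have hmin2 : min u2 v4 = u2 := min_eq_left hlt.le
  have hav : a1 * v1 = a2 * u2 := by rw [hv1, hu2]; field_simp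
  refine ⟨hge, hlt, ?_, ?_, ?_, ?_, ?_, ?_, ?_, ?_, ?_, ?_⟩ <;>
    try simp only [hmin1, hmin2]
  · linarith [hav]
  · linarith [hav]
  · rw [hv1, hv2]; field_simp; ring
  · rw [hv1, hv2, hu2]; field_simp; ring
  · rw [hv1, hv3, hv4]; field_simp; ring
  · rw [hu2, hv3, hv4]; field_simp; ring
  · rw [hu1, hu2]; field_simp; ring
  · rw [hv1, hv2, hv3, hv4, hN]; field_simp; ring
  · rw [hv1, hv2, hu1, hD3]; field_simp; ring
  · rw [hv3, hv4, hu2, hN, hD3]; field_simp; ring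
end

section
/- Suppose a₁, a₂, c₁, c₂, c₃, c₄ > 0, N₀ = M₀ + W₁ + W₂, and conditions (I₃ᶜ) and (I₄ᶜ) hold. Then the vector given by u₁* = (a₂c₃(a₁+c₁+c₂)/D₁)N₀ − W₁, u₂* = M₀ + W₁ − (a₂c₃(a₁+c₁+c₂)/D₁)N₀, v₁* = (a₂c₂c₃/D₁)N₀, v₂* = (a₂c₃(a₁+c₁)/D₁)N₀, v₃* = (a₁c₂(a₂+c₄)/D₁)N₀, v₄* = (a₁c₂c₃/D₁)N₀ satisfies u₁* ≥ v₁* and u₂* ≥ v₄*, and is a constant equilibrium. -/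
theorem equilibrium_Q4_dominates (a1 a2 c1 c2 c3 c4 M0 N0 W1 W2 : ℝ)
    (ha1 : 0 < a1) (ha2 : 0 < a2) (hc1 : 0 < c1) (hc2 : 0 < c2)
    (hc3 : 0 < c3) (hc4 : 0 < c4)
    (D1 : ℝ)
    (hN : N0 = M0 + W1 + W2)
    (hD1 : D1 = a1 * c2 * (a2 + c4) + a2 * c3 * (a1 + c1) + c2 * c3 * (a1 + a2))
    (hI3c : a2 * c3 * (a1 + c1) * N0 ≥ D1 * W1)
    (hI4c : a1 * c2 * (a2 + c4) * N0 ≥ D1 * W2)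
    (u1 u2 v1 v2 v3 v4 : ℝ)
    (hu1 : u1 = (a2 * c3 * (a1 + c1 + c2) / D1) * N0 - W1)
    (hu2 : u2 = M0 + W1 - (a2 * c3 * (a1 + c1 + c2) / D1) * N0)
    (hv1 : v1 = (a2 * c2 * c3 / D1) * N0)
    (hv2 : v2 = (a2 * c3 * (a1 + c1) / D1) * N0)
    (hv3 : v3 = (a1 * c2 * (a2 + c4) / D1) * N0)
    (hv4 : v4 = (a1 * c2 * c3 / D1) * N0) :
    u1 ≥ v1 ∧ u2 ≥ v4 ∧
      IsConstantEquilibrium a1 a2 c1 c2 c3 c4 M0 N0 W1 W2 u1 u2 v1 v2 v3 v4 := by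
  have hD : 0 < D1 := by rw [hD1]; positivity
  have hu1v1 : u1 ≥ v1 := by
    rw [hu1, hv1]
    rw [ge_iff_le, ← sub_nonneg]
    have : (a2 * c3 * (a1 + c1 + c2) / D1) * N0 - W1 - (a2 * c2 * c3 / D1) * N0
        = (a2 * c3 * (a1 + c1) * N0 - D1 * W1) / D1 := by field_simp; ring
    rw [this]
    exact div_nonneg (by linarith) hD.le
  have hu2v4 : u2 ≥ v4 := by
    rw [hu2, hv4]
    rw [ge_iff_le, ← sub_nonneg]
    have : M0 + W1 - (a2 * c3 * (a1 + c1 + c2) / D1) * N0 - (a1 * c2 * c3 / D1) * N0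
        = (a1 * c2 * (a2 + c4) * N0 - D1 * W2) / D1 := by
      rw [hD1] at *; field_simp; nlinarith [hN]
    rw [this]
    exact div_nonneg (by linarith) hD.le
  have hm1 : min u1 v1 = v1 := min_eq_right hu1v1
  have hm2 : min u2 v4 = v4 := min_eq_right hu2v4
  have hD0 : D1 ≠ 0 := ne_of_gt hD
  subst hu1 hu2 hv1 hv2 hv3 hv4 hN
  refine ⟨hu1v1, hu2v4, ?_, ?_, ?_, ?_, ?_, ?_, ?_, ?_, ?_, ?_⟩
  · rw [hm1, hm2]; field_simp; ring
  · rw [hm1, hm2]; field_simp; ring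
  · rw [hm1]; field_simp; rw [hD1]; ring
  · rw [hm2]; field_simp; rw [hD1]; ring
  · rw [hm1]; field_simp; rw [hD1]; ring
  · rw [hm2]; field_simp; rw [hD1]; ring
  · ring
  · field_simp; rw [hD1]; ring
  · ring
  · have key : D1 * D1⁻¹ = 1 := mul_inv_cancel₀ hD0
    linear_combination (-(M0 + W1 + W2) / D1) * hD1 + (M0 + W1 + W2) * key
end

section
/- Suppose a₁, a₂, c₁, c₂, c₃, c₄ > 0. If (u₁, u₂, v₁, v₂, v₃, v₄) ∈ ℝ⁶ is a constant equilibrium satisfying u₁ ≥ v₁ and u₂ ≥ v₄, then u₁ = (a₂c₃(a₁+c₁+c₂)/D₁)N₀ − W₁, u₂ = M₀ + W₁ − (a₂c₃(a₁+c₁+c₂)/D₁)N₀, v₁ = (a₂c₂c₃/D₁)N₀, v₂ = (a₂c₃(a₁+c₁)/D₁)N₀, v₃ = (a₁c₂(a₂+c₄)/D₁)N₀, v₄ = (a₁c₂c₃/D₁)N₀. In particular, there is at most one constant equilibrium with u₁ ≥ v₁ and u₂ ≥ v₄. -/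
theorem equilibrium_Q4_unique (a1 a2 c1 c2 c3 c4 M0 N0 W1 W2 : ℝ)
    (ha1 : 0 < a1) (ha2 : 0 < a2) (hc1 : 0 < c1) (hc2 : 0 < c2)
    (hc3 : 0 < c3) (hc4 : 0 < c4)
    (D1 : ℝ)
    (hD1 : D1 = a1 * c2 * (a2 + c4) + a2 * c3 * (a1 + c1) + c2 * c3 * (a1 + a2))
    (u1 u2 v1 v2 v3 v4 : ℝ)
    (heq : IsConstantEquilibrium a1 a2 c1 c2 c3 c4 M0 N0 W1 W2 u1 u2 v1 v2 v3 v4)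
    (h1 : u1 ≥ v1) (h2 : u2 ≥ v4) :
    u1 = (a2 * c3 * (a1 + c1 + c2) / D1) * N0 - W1 ∧
    u2 = M0 + W1 - (a2 * c3 * (a1 + c1 + c2) / D1) * N0 ∧
    v1 = (a2 * c2 * c3 / D1) * N0 ∧
    v2 = (a2 * c3 * (a1 + c1) / D1) * N0 ∧
    v3 = (a1 * c2 * (a2 + c4) / D1) * N0 ∧
    v4 = (a1 * c2 * c3 / D1) * N0 := by
  obtain ⟨e1, e2, e3, e4, e5, e6, e7, e8, e9, e10⟩ := heq
  rw [min_eq_right h1] at e1 e3 e5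
  rw [min_eq_right h2] at e1
  subst hD1
  set D1 := a1 * c2 * (a2 + c4) + a2 * c3 * (a1 + c1) + c2 * c3 * (a1 + a2) with hD1
  have hD : 0 < D1 := by
    have h01 := mul_pos (mul_pos ha1 hc2) (add_pos ha2 hc4)
    have h02 := mul_pos (mul_pos ha2 hc3) (add_pos ha1 hc1)
    have h03 := mul_pos (mul_pos hc2 hc3) (add_pos ha1 ha2)
    rw [hD1]; linarith
  have hDne : D1 ≠ 0 := ne_of_gt hD
  have ha2' : a2 ≠ 0 := ne_of_gt ha2
  have hc2' : c2 ≠ 0 := ne_of_gt hc2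
  have hc3' : c3 ≠ 0 := ne_of_gt hc3
  have hv1' : D1 * v1 = a2 * c2 * c3 * N0 := by
    rw [hD1]
    linear_combination a2 * c2 * c3 * e8 - a2 * c3 * e3 + a2 * c2 * e5 -
      c2 * (c3 + c4) * e1
  have hv4' : D1 * v4 = a1 * c2 * c3 * N0 := by
    apply mul_left_cancel₀ ha2'
    linear_combination D1 * e1 + a1 * hv1'
  have hv2' : D1 * v2 = a2 * c3 * (a1 + c1) * N0 := by
    apply mul_left_cancel₀ hc2'
    linear_combination D1 * e3 + (a1 + c1) * hv1'
  have hv3' : D1 * v3 = a1 * c2 * (a2 + c4) * N0 := by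
    apply mul_left_cancel₀ hc3'
    linear_combination -D1 * e5 + c4 * hv4' + a1 * hv1'
  have hv1 : v1 = (a2 * c2 * c3 / D1) * N0 := by field_simp; linear_combination hv1'
  have hv2 : v2 = (a2 * c3 * (a1 + c1) / D1) * N0 := by
    field_simp; linear_combination hv2'
  have hv3 : v3 = (a1 * c2 * (a2 + c4) / D1) * N0 := by
    field_simp; linear_combination hv3'
  have hv4 : v4 = (a1 * c2 * c3 / D1) * N0 := by field_simp; linear_combination hv4'
  have hu1 : u1 = (a2 * c3 * (a1 + c1 + c2) / D1) * N0 - W1 := by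
    have h : u1 = v1 + v2 - W1 := by linarith
    rw [h, hv1, hv2]
    field_simp
    ring
  have hu2 : u2 = M0 + W1 - (a2 * c3 * (a1 + c1 + c2) / D1) * N0 := by
    have h : u2 = M0 - u1 := by linarith
    rw [h, hu1]; ring
  exact ⟨hu1, hu2, hv1, hv2, hv3, hv4⟩
end

section
/- Let a₁, a₂, c₁, c₂, c₃, c₄ > 0 and let M₀, N₀, W₁, W₂ be real numbers with N₀ = M₀ + W₁ + W₂. Then the four inequalities a₂(a₁+c₁)M₀ < c₂(a₁+a₂)W₁ (I₁), a₁(a₂+c₄)M₀ ≥ c₃(a₁+a₂)W₂ (I₂ᶜ), a₂c₃(a₁+c₁)N₀ ≥ D₁W₁ (I₃ᶜ), and a₁c₂(a₂+c₄)N₀ < D₁W₂ (I₄) cannot all hold simultaneously. -/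
theorem not_I1_I2c_I3c_I4 (a1 a2 c1 c2 c3 c4 M0 N0 W1 W2 D1 : ℝ)
    (ha1 : 0 < a1) (ha2 : 0 < a2) (hc1 : 0 < c1) (hc2 : 0 < c2)
    (hc3 : 0 < c3) (hc4 : 0 < c4)
    (hD1 : D1 = a1 * c2 * (a2 + c4) + a2 * c3 * (a1 + c1) + c2 * c3 * (a1 + a2))
    (hN : N0 = M0 + W1 + W2) :
    ¬ (a2 * (a1 + c1) * M0 < c2 * (a1 + a2) * W1 ∧
       a1 * (a2 + c4) * M0 ≥ c3 * (a1 + a2) * W2 ∧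
       a2 * c3 * (a1 + c1) * N0 ≥ D1 * W1 ∧
       a1 * c2 * (a2 + c4) * N0 < D1 * W2) := by
  rintro ⟨h1, h2, h3, h4⟩
  subst hD1 hN
  nlinarith [mul_le_mul_of_nonneg_left h2 (le_of_lt (mul_pos hc3 (mul_pos ha2 (by positivity : (0:ℝ) < a1 + c1)))),
    mul_le_mul_of_nonneg_left h3 (le_of_lt (mul_pos hc3 (by positivity : (0:ℝ) < a1 + a2))),
    mul_lt_mul_of_pos_left h1 (mul_pos hc3
      (by positivity : (0:ℝ) < a1 * (a2 + c4) + c3 * (a1 + a2))),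
    mul_pos ha1 ha2, mul_pos hc2 hc3]
end

section
/- Let a₁, a₂, c₁, c₂, c₃, c₄ > 0 and let M₀, N₀, W₁, W₂ be real numbers with N₀ = M₀ + W₁ + W₂. Then the four inequalities a₂(a₁+c₁)M₀ ≥ c₂(a₁+a₂)W₁ (I₁ᶜ), a₁(a₂+c₄)M₀ < c₃(a₁+a₂)W₂ (I₂), a₂c₃(a₁+c₁)N₀ < D₁W₁ (I₃), and a₁c₂(a₂+c₄)N₀ ≥ D₁W₂ (I₄ᶜ) cannot all hold simultaneously. -/
theorem not_I1c_I2_I3_I4c (a1 a2 c1 c2 c3 c4 M0 N0 W1 W2 D1 : ℝ)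
    (ha1 : 0 < a1) (ha2 : 0 < a2) (hc1 : 0 < c1) (hc2 : 0 < c2)
    (hc3 : 0 < c3) (hc4 : 0 < c4)
    (hD1 : D1 = a1 * c2 * (a2 + c4) + a2 * c3 * (a1 + c1) + c2 * c3 * (a1 + a2))
    (hN : N0 = M0 + W1 + W2) :
    ¬ (a2 * (a1 + c1) * M0 ≥ c2 * (a1 + a2) * W1 ∧
       a1 * (a2 + c4) * M0 < c3 * (a1 + a2) * W2 ∧
       a2 * c3 * (a1 + c1) * N0 < D1 * W1 ∧
       a1 * c2 * (a2 + c4) * N0 ≥ D1 * W2) := by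
  rintro ⟨h1, h2, h3, h4⟩
  subst hD1 hN
  -- star : c3*A*W2 < c2*C*W1, from c3*h1 + h3
  have hstar : c3 * (a2 * (a1 + c1)) * W2 < c2 * (a1 * (a2 + c4)) * W1 := by
    nlinarith [mul_le_mul_of_nonneg_left h1 hc3.le, h3]
  -- contradiction: c2*C*h1 + B*hstar + c2*A*h2
  nlinarith [mul_le_mul_of_nonneg_left h1 (mul_pos hc2 (mul_pos ha1 (add_pos ha2 hc4))).le,
    mul_lt_mul_of_pos_left hstar (mul_pos hc2 (add_pos ha1 ha2)),
    mul_lt_mul_of_pos_left h2 (mul_pos hc2 (mul_pos ha2 (add_pos ha1 hc1)))]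
end

section
/- Let a₁, a₂, c₁, c₂, c₃, c₄ > 0 and let M₀, N₀, W₁, W₂ be real numbers with N₀ = M₀ + W₁ + W₂. Then at least one of the following four conjunctions holds: (I₁ and I₂), (I₃ and I₂ᶜ), (I₄ and I₁ᶜ), (I₃ᶜ and I₄ᶜ); where (I₁): a₂(a₁+c₁)M₀ < c₂(a₁+a₂)W₁, (I₂): a₁(a₂+c₄)M₀ < c₃(a₁+a₂)W₂, (I₃): a₂c₃(a₁+c₁)N₀ < D₁W₁, (I₄): a₁c₂(a₂+c₄)N₀ < D₁W₂, and (Iᵢᶜ) denotes the corresponding inequality with < replaced by ≥. -/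
theorem four_cases_cover (a1 a2 c1 c2 c3 c4 M0 N0 W1 W2 D1 : ℝ)
    (ha1 : 0 < a1) (ha2 : 0 < a2) (hc1 : 0 < c1) (hc2 : 0 < c2)
    (hc3 : 0 < c3) (hc4 : 0 < c4)
    (hD1 : D1 = a1 * c2 * (a2 + c4) + a2 * c3 * (a1 + c1) + c2 * c3 * (a1 + a2))
    (hN : N0 = M0 + W1 + W2) :
    (a2 * (a1 + c1) * M0 < c2 * (a1 + a2) * W1 ∧
       a1 * (a2 + c4) * M0 < c3 * (a1 + a2) * W2) ∨
    (a2 * c3 * (a1 + c1) * N0 < D1 * W1 ∧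
       a1 * (a2 + c4) * M0 ≥ c3 * (a1 + a2) * W2) ∨
    (a1 * c2 * (a2 + c4) * N0 < D1 * W2 ∧
       a2 * (a1 + c1) * M0 ≥ c2 * (a1 + a2) * W1) ∨
    (a2 * c3 * (a1 + c1) * N0 ≥ D1 * W1 ∧
       a1 * c2 * (a2 + c4) * N0 ≥ D1 * W2) := by
  subst hD1 hN
  set A := a2 * (a1 + c1) with hA
  set B := c2 * (a1 + a2) with hB
  set C := a1 * (a2 + c4) with hC
  set E := c3 * (a1 + a2) with hE
  have hApos : 0 < A := by positivity
  have hBpos : 0 < B := by positivity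
  have hCpos : 0 < C := by positivity
  have hEpos : 0 < E := by positivity
  by_cases h3 : a2 * c3 * (a1 + c1) * (M0 + W1 + W2) <
      (a1 * c2 * (a2 + c4) + a2 * c3 * (a1 + c1) + c2 * c3 * (a1 + a2)) * W1
  · by_cases h2 : C * M0 < E * W2
    · -- show I1 by contradiction
      left
      refine ⟨?_, h2⟩
      by_contra h1
      push_neg at h1
      have h3' : c3 * A * (M0 + W1 + W2) < (c2 * C + c3 * A + c3 * B) * W1 := by
        rw [hA, hB, hC]; ring_nf; ring_nf at h3; linarith
      have key : c3 * A * W2 < c2 * C * W1 := by nlinarith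
      simp only [hA, hB, hC, hE] at key h1 h2
      nlinarith [mul_lt_mul_of_pos_left key (by positivity : (0:ℝ) < c2 * (a1 + a2)),
        mul_le_mul_of_nonneg_left h1 (by positivity : (0:ℝ) ≤ c2 * (a1 * (a2 + c4))),
        mul_lt_mul_of_pos_left h2 (by positivity : (0:ℝ) < c2 * (a2 * (a1 + c1)))]
    · right; left; exact ⟨h3, not_lt.mp h2⟩
  · by_cases h4 : a1 * c2 * (a2 + c4) * (M0 + W1 + W2) <
        (a1 * c2 * (a2 + c4) + a2 * c3 * (a1 + c1) + c2 * c3 * (a1 + a2)) * W2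
    · by_cases h1 : A * M0 < B * W1
      · left
        refine ⟨h1, ?_⟩
        by_contra h2
        push_neg at h2
        have h4' : c2 * C * (M0 + W1 + W2) < (c2 * C + c3 * A + c2 * E) * W2 := by
          rw [hA, hC, hE]; ring_nf; ring_nf at h4; linarith
        have key : c2 * C * W1 < c3 * A * W2 := by nlinarith
        simp only [hA, hB, hC, hE] at key h1 h2
        nlinarith [mul_lt_mul_of_pos_left key (by positivity : (0:ℝ) < c3 * (a1 + a2)),
          mul_le_mul_of_nonneg_left h2 (by positivity : (0:ℝ) ≤ c3 * (a2 * (a1 + c1))),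
          mul_lt_mul_of_pos_left h1 (by positivity : (0:ℝ) < c3 * (a1 * (a2 + c4)))]
      · right; right; left; exact ⟨h4, not_lt.mp h1⟩
    · right; right; right; exact ⟨not_lt.mp h3, not_lt.mp h4⟩
end

section
/- Let a₁, a₂, c₁, c₂, c₃, c₄ > 0 and let M₀, N₀, W₁, W₂ be real numbers with N₀ = M₀ + W₁ + W₂. Then there exists exactly one constant equilibrium, i.e., exactly one vector (u₁, u₂, v₁, v₂, v₃, v₄) ∈ ℝ⁶ satisfying the equilibrium equations together with the conservation constraints. -/
/-- The minimum of the two branch fixed-point values is a fixed point of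
`A ↦ a * min u ((c*s - A)/e)`. -/
lemma fix_exists (a e c s u : ℝ) (ha : 0 < a) (he : 0 < e) :
    min (a*u) (a*c*s/(e+a)) = a * min u ((c*s - min (a*u) (a*c*s/(e+a)))/e) := by
  have hea : 0 < e + a := by linarith
  rcases le_total (a*u) (a*c*s/(e+a)) with h | h
  · rw [min_eq_left h]
    have h2 : a*u*(e+a) ≤ a*c*s := by
      have := (le_div_iff₀ hea).mp h
      linarith
    have hu : u ≤ (c*s - a*u)/e := by
      rw [le_div_iff₀ he]
      nlinarith
    rw [min_eq_left hu]
  · rw [min_eq_right h]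
    have key : (c*s - a*c*s/(e+a))/e = c*s/(e+a) := by
      field_simp
      ring
    rw [key]
    have h3 : a*(c*s/(e+a)) ≤ a*u := by
      have heq2 : a*(c*s/(e+a)) = a*c*s/(e+a) := by ring
      rw [heq2]
      exact h
    have hle : c*s/(e+a) ≤ u := le_of_mul_le_mul_left h3 ha
    rw [min_eq_right hle]
    ring

/-- Uniqueness of the fixed point of `A ↦ a * min u ((c*s - A)/e)`. -/
lemma fix_unique (a e c s u A : ℝ) (ha : 0 < a) (he : 0 < e)
    (h : A = a * min u ((c*s - A)/e)) :
    A = min (a*u) (a*c*s/(e+a)) := by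
  set B := min (a*u) (a*c*s/(e+a)) with hB
  have hfix := fix_exists a e c s u ha he
  rcases lt_trichotomy A B with hlt | heq | hgt
  · exfalso
    have h1 : (c*s - B)/e ≤ (c*s - A)/e := by gcongr
    have h2 : min u ((c*s - B)/e) ≤ min u ((c*s - A)/e) := min_le_min le_rfl h1
    have h3 : a * min u ((c*s - B)/e) ≤ a * min u ((c*s - A)/e) :=
      mul_le_mul_of_nonneg_left h2 ha.le
    rw [← hfix, ← h] at h3
    linarith
  · exact heq
  · exfalso
    have h1 : (c*s - A)/e ≤ (c*s - B)/e := by gcongr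
    have h2 : min u ((c*s - A)/e) ≤ min u ((c*s - B)/e) := min_le_min le_rfl h1
    have h3 : a * min u ((c*s - A)/e) ≤ a * min u ((c*s - B)/e) :=
      mul_le_mul_of_nonneg_left h2 ha.le
    rw [← hfix, ← h] at h3
    linarith

/-- The fixed-point value as a function of `u`. -/
noncomputable def Fb (a c d W u : ℝ) : ℝ := min (a*u) (a*c*(W+u)/(d+c+a))

lemma Fb_fix (a c d W u : ℝ) (ha : 0 < a) (hc : 0 < c) (hd : 0 < d) :
    Fb a c d W u = a * min u ((c*(W+u) - Fb a c d W u)/(d+c)) :=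
  fix_exists a (d+c) c (W+u) u ha (by linarith)

lemma Fb_fix_unique (a c d W u A : ℝ) (ha : 0 < a) (hc : 0 < c) (hd : 0 < d)
    (h : A = a * min u ((c*(W+u) - A)/(d+c))) : A = Fb a c d W u :=
  fix_unique a (d+c) c (W+u) u A ha (by linarith) h

lemma Fb_strictMono (a c d W : ℝ) (ha : 0 < a) (hc : 0 < c) (hd : 0 < d) :
    StrictMono (Fb a c d W) := by
  intro x y hxy
  have hD : (0:ℝ) < d+c+a := by linarith
  have h1 : a*x < a*y := by nlinarith
  have h2 : a*c*(W+x)/(d+c+a) < a*c*(W+y)/(d+c+a) := by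
    rw [div_lt_div_iff₀ hD hD]
    nlinarith [mul_pos (mul_pos (mul_pos ha hc) hD) (sub_pos.mpr hxy)]
  exact lt_min ((min_le_left _ _).trans_lt h1) ((min_le_right _ _).trans_lt h2)

lemma Fb_continuous (a c d W : ℝ) : Continuous (Fb a c d W) := by
  unfold Fb
  fun_prop

lemma Fb_nonneg (a c d W u : ℝ) (ha : 0 < a) (hc : 0 < c) (hd : 0 < d)
    (hu : 0 ≤ u) (hW : 0 ≤ W + u) : 0 ≤ Fb a c d W u :=
  le_min (mul_nonneg ha.le hu)
    (div_nonneg (mul_nonneg (mul_nonneg ha.le hc.le) hW) (by linarith))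

lemma Fb_le (a c d W u : ℝ) : Fb a c d W u ≤ a*u := min_le_left _ _

/-- Any solution of the equilibrium system is determined by its first coordinate,
which is a root of `Fb a1 c2 c1 W1 · - Fb a2 c3 c4 W2 (M0 - ·)`. -/
lemma solution_char (a1 a2 c1 c2 c3 c4 M0 N0 W1 W2 q1 q2 q3 q4 q5 q6 : ℝ)
    (ha1 : 0 < a1) (ha2 : 0 < a2) (hc1 : 0 < c1) (hc2 : 0 < c2)
    (hc3 : 0 < c3) (hc4 : 0 < c4)
    (hq : IsConstantEquilibrium a1 a2 c1 c2 c3 c4 M0 N0 W1 W2 q1 q2 q3 q4 q5 q6) :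
    Fb a1 c2 c1 W1 q1 = Fb a2 c3 c4 W2 (M0 - q1) ∧
    q2 = M0 - q1 ∧
    q3 = (c2*(W1+q1) - Fb a1 c2 c1 W1 q1)/(c1+c2) ∧
    q4 = W1 + q1 - q3 ∧
    q6 = (c3*(W2+(M0-q1)) - Fb a1 c2 c1 W1 q1)/(c4+c3) ∧
    q5 = W2 + (M0-q1) - q6 := by
  obtain ⟨e1, e2, e3, e4, e5, e6, h7, h8, h9, h10⟩ := hq
  have hc12 : (0:ℝ) < c1 + c2 := by linarith
  have hc43 : (0:ℝ) < c4 + c3 := by linarith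
  have hq2 : q2 = M0 - q1 := by linarith
  have hq4 : q4 = W1 + q1 - q3 := by linarith
  have hq5 : q5 = W2 + (M0 - q1) - q6 := by
    have : q5 + q6 - q2 = W2 := h10
    linarith
  have E3 : c2*q4 = a1 * min q1 q3 + c1*q3 := by linarith [e3]
  have E1 : a1 * min q1 q3 = a2 * min q2 q6 := by linarith [e1]
  have E6 : c3*q5 = a2 * min q2 q6 + c4*q6 := by linarith [e6]
  set A := a1 * min q1 q3 with hA
  have hq3 : q3 = (c2*(W1+q1) - A)/(c1+c2) := by
    rw [eq_div_iff (ne_of_gt hc12)]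
    rw [hq4] at E3
    linarith
  have hAr : A = a1 * min q1 ((c2*(W1+q1) - A)/(c1+c2)) := by
    rw [← hq3]
  have hAF : A = Fb a1 c2 c1 W1 q1 := Fb_fix_unique a1 c2 c1 W1 q1 A ha1 hc2 hc1 hAr
  have hA2 : A = a2 * min q2 q6 := E1
  have hq6 : q6 = (c3*(W2+q2) - A)/(c4+c3) := by
    rw [eq_div_iff (ne_of_gt hc43)]
    rw [hq5, ← hq2] at E6
    linarith
  have hAr2 : A = a2 * min q2 ((c3*(W2+q2) - A)/(c4+c3)) := by
    rw [← hq6]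
    exact hA2
  have hAG : A = Fb a2 c3 c4 W2 q2 := Fb_fix_unique a2 c3 c4 W2 q2 A ha2 hc3 hc4 hAr2
  refine ⟨?_, hq2, ?_, hq4, ?_, hq5⟩
  · rw [← hAF, ← hq2]
    exact hAG
  · rw [← hAF]
    exact hq3
  · rw [← hAF, ← hq2]
    exact hq6

theorem exists_unique_constant_equilibrium (a1 a2 c1 c2 c3 c4 M0 N0 W1 W2 : ℝ)
    (ha1 : 0 < a1) (ha2 : 0 < a2) (hc1 : 0 < c1) (hc2 : 0 < c2)
    (hc3 : 0 < c3) (hc4 : 0 < c4)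
    (hN : N0 = M0 + W1 + W2) :
    ∃! p : ℝ × ℝ × ℝ × ℝ × ℝ × ℝ,
      IsConstantEquilibrium a1 a2 c1 c2 c3 c4 M0 N0 W1 W2
        p.1 p.2.1 p.2.2.1 p.2.2.2.1 p.2.2.2.2.1 p.2.2.2.2.2 := by
  have hc12 : (0:ℝ) < c1 + c2 := by linarith
  have hc43 : (0:ℝ) < c4 + c3 := by linarith
  set H : ℝ → ℝ := fun u => Fb a1 c2 c1 W1 u - Fb a2 c3 c4 W2 (M0 - u) with hHdef
  have hHmono : StrictMono H := by
    intro x y hxy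
    have h1 := Fb_strictMono a1 c2 c1 W1 ha1 hc2 hc1 hxy
    have h2 := Fb_strictMono a2 c3 c4 W2 ha2 hc3 hc4 (show M0 - y < M0 - x by linarith)
    simp only [hHdef]
    linarith
  have hHcont : Continuous H := by
    simp only [hHdef]
    exact (Fb_continuous a1 c2 c1 W1).sub
      ((Fb_continuous a2 c3 c4 W2).comp (continuous_const.sub continuous_id))
  set aa := min 0 (min M0 (M0+W2)) with haadef
  set bb := max 0 (max M0 (-W1)) with hbbdef
  have haa0 : aa ≤ 0 := min_le_left _ _
  have haaM : aa ≤ M0 := le_trans (min_le_right _ _) (min_le_left _ _)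
  have haaW : aa ≤ M0 + W2 := le_trans (min_le_right _ _) (min_le_right _ _)
  have hbb0 : (0:ℝ) ≤ bb := le_max_left _ _
  have hbbM : M0 ≤ bb := le_trans (le_max_left _ _) (le_max_right _ _)
  have hbbW : -W1 ≤ bb := le_trans (le_max_right _ _) (le_max_right _ _)
  have hHa : H aa ≤ 0 := by
    have h1 : Fb a1 c2 c1 W1 aa ≤ a1 * aa := Fb_le _ _ _ _ _
    have h2 : 0 ≤ Fb a2 c3 c4 W2 (M0 - aa) :=
      Fb_nonneg _ _ _ _ _ ha2 hc3 hc4 (by linarith) (by linarith)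
    have h3 : a1 * aa ≤ 0 := mul_nonpos_iff.mpr (Or.inl ⟨ha1.le, haa0⟩)
    simp only [hHdef]
    linarith
  have hHb : (0:ℝ) ≤ H bb := by
    have h1 : 0 ≤ Fb a1 c2 c1 W1 bb :=
      Fb_nonneg _ _ _ _ _ ha1 hc2 hc1 hbb0 (by linarith)
    have h2 : Fb a2 c3 c4 W2 (M0 - bb) ≤ a2 * (M0 - bb) := Fb_le _ _ _ _ _
    have h3 : a2 * (M0 - bb) ≤ 0 := mul_nonpos_iff.mpr (Or.inl ⟨ha2.le, by linarith⟩)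
    simp only [hHdef]
    linarith
  have hab : aa ≤ bb := le_trans haa0 hbb0
  have hmem : (0:ℝ) ∈ Set.Icc (H aa) (H bb) := ⟨hHa, hHb⟩
  obtain ⟨u, humem, hu⟩ := intermediate_value_Icc hab hHcont.continuousOn hmem
  have hFG : Fb a1 c2 c1 W1 u = Fb a2 c3 c4 W2 (M0 - u) := by
    simp only [hHdef] at hu
    linarith
  set A := Fb a1 c2 c1 W1 u with hAdef
  set V1 := (c2*(W1+u) - A)/(c1+c2) with hV1
  set V4 := (c3*(W2+(M0-u)) - A)/(c4+c3) with hV4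
  have hA1 : A = a1 * min u V1 := by
    rw [hV1, hAdef]
    exact Fb_fix a1 c2 c1 W1 u ha1 hc2 hc1
  have hA2 : A = a2 * min (M0-u) V4 := by
    rw [hV4, hFG]
    exact Fb_fix a2 c3 c4 W2 (M0-u) ha2 hc3 hc4
  have hV1e : (c1+c2)*V1 = c2*(W1+u) - A := by
    rw [hV1]
    field_simp
  have hV4e : (c4+c3)*V4 = c3*(W2+(M0-u)) - A := by
    rw [hV4]
    field_simp
  have hmain : IsConstantEquilibrium a1 a2 c1 c2 c3 c4 M0 N0 W1 W2
      u (M0-u) V1 (W1+u-V1) (W2+(M0-u)-V4) V4 := by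
    refine ⟨?_, ?_, ?_, ?_, ?_, ?_, ?_, ?_, ?_, ?_⟩
    · linear_combination hA1 - hA2
    · linear_combination hA2 - hA1
    · linear_combination hA1 - hV1e
    · linear_combination hV1e - hA2
    · linear_combination hV4e - hA1
    · linear_combination hA2 - hV4e
    · ring
    · rw [hN]; ring
    · ring
    · ring
  refine ⟨(u, M0-u, V1, W1+u-V1, W2+(M0-u)-V4, V4), hmain, ?_⟩
  rintro ⟨q1, q2, q3, q4, q5, q6⟩ hq
  obtain ⟨hg, hq2, hq3, hq4, hq6, hq5⟩ :=
    solution_char a1 a2 c1 c2 c3 c4 M0 N0 W1 W2 q1 q2 q3 q4 q5 q6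
      ha1 ha2 hc1 hc2 hc3 hc4 hq
  have h0 : H q1 = 0 := by
    simp only [hHdef]
    linarith [hg]
  have hq1 : q1 = u := hHmono.injective (h0.trans hu.symm)
  subst hq1
  simp only [Prod.mk.injEq]
  refine ⟨trivial, hq2, ?_, ?_, ?_, ?_⟩
  · rw [hq3, hV1, hAdef]
  · rw [hq4, hq3, hV1, hAdef]
  · rw [hq5, hq6, hV4, hAdef]
  · rw [hq6, hV4, hAdef]
end

section
/- Let a, b, d ≥ 0 and c > 0, let ρ : ℝ → ℝ be continuous with ρ(t) → 0 as t → ∞, and let w : ℝ → ℝ be differentiable on [0,∞) with w(0) > 0 and w′(t) = −a·min(w(t), b) − c·w(t) + d + ρ(t) for all t ≥ 0. Then, as t → ∞, w(t) converges to d/(a+c) if d/(a+c) ≤ b, and w(t) converges to (d − a·b)/c if d/(a+c) > b. -/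
open Filter Set Real Topology

lemma tendsto_slope_abs {g : ℝ → ℝ} {x g' : ℝ} (h : HasDerivAt g g' x) :
    Tendsto (fun z => (z - x)⁻¹ * (|g z| - |g x|)) (𝓝[>] x)
      (𝓝 (if 0 < g x then g' else if g x < 0 then -g' else |g'|)) := by
  have hs : Tendsto (slope g x) (𝓝[>] x) (𝓝 g') :=
    (hasDerivAt_iff_tendsto_slope.1 h).mono_left
      (nhdsWithin_mono x fun z hz => ne_of_gt hz)
  rcases lt_trichotomy (g x) 0 with hgx | hgx | hgx
  · rw [if_neg (by linarith), if_pos hgx]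
    have hcont : ∀ᶠ z in 𝓝[>] x, g z < 0 :=
      ((h.continuousAt.eventually_lt_const hgx)).filter_mono nhdsWithin_le_nhds
    refine (hs.neg.congr' ?_)
    filter_upwards [hcont] with z hz
    rw [slope_def_field]
    rw [abs_of_neg hz, abs_of_neg hgx]
    field_simp
    ring
  · rw [if_neg (by simp [hgx]), if_neg (by simp [hgx])]
    have : Tendsto (fun z => |slope g x z|) (𝓝[>] x) (𝓝 |g'|) := hs.abs
    refine this.congr' ?_
    filter_upwards [self_mem_nhdsWithin] with z hz
    have hzx : (0:ℝ) < z - x := sub_pos.2 (mem_Ioi.1 hz)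
    rw [slope_def_field, hgx, sub_zero, abs_zero, sub_zero, abs_div,
      abs_of_pos hzx, div_eq_inv_mul]
  · rw [if_pos hgx]
    have hcont : ∀ᶠ z in 𝓝[>] x, 0 < g z :=
      ((h.continuousAt.eventually_const_lt hgx)).filter_mono nhdsWithin_le_nhds
    refine hs.congr' ?_
    filter_upwards [hcont] with z hz
    rw [slope_def_field, abs_of_pos hz, abs_of_pos hgx]
    ring

lemma ode_conv_aux (a b c d L : ℝ) (ha : 0 ≤ a) (hc : 0 < c) (ρ w : ℝ → ℝ)
    (hρ : Tendsto ρ atTop (nhds 0))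
    (hw : ∀ t ≥ (0 : ℝ),
      HasDerivAt w (-a * min (w t) b - c * w t + d + ρ t) t)
    (hL : -a * min L b - c * L + d = 0) :
    Tendsto w atTop (nhds L) := by
  rw [Metric.tendsto_atTop]
  intro ε hε
  set ε' := c * ε / 3 with hε'def
  have hε' : 0 < ε' := by positivity
  have h1 : ∀ᶠ t in atTop, |ρ t| ≤ ε' := by
    have h2 := Metric.tendsto_atTop.1 hρ ε' hε'
    obtain ⟨N, hN⟩ := h2
    filter_upwards [eventually_ge_atTop N] with t ht
    have := (hN t ht).le
    rwa [Real.dist_eq, sub_zero] at this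
  rw [eventually_atTop] at h1
  obtain ⟨T₀, hT₀⟩ := h1
  set T := max T₀ 0 with hTdef
  have hT0 : (0:ℝ) ≤ T := le_max_right _ _
  set δ := |w T - L| with hδdef
  -- Gronwall estimate
  have key : ∀ t, T ≤ t → |w t - L| ≤ δ * Real.exp (-c * (t - T)) + ε / 3 := by
    intro t ht
    have grb := le_gronwallBound_of_liminf_deriv_right_le
      (f := fun s => |w s - L|) (f' := fun s => -c * |w s - L| + ε')
      (δ := δ) (K := -c) (ε := ε') (a := T) (b := t)
      (fun s hs => (((hw s (le_trans hT0 hs.1)).continuousAt.sub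
        continuousAt_const).abs).continuousWithinAt)
      ?_ le_rfl ?_ t ⟨ht, le_rfl⟩
    · rw [gronwallBound_of_K_ne_0 (by linarith : (-c) ≠ 0)] at grb
      have hexp : (0:ℝ) < Real.exp (-c * (t - T)) := Real.exp_pos _
      have hdiv : ε' / (-c) = -(ε / 3) := by
        rw [hε'def]; field_simp
      rw [hdiv] at grb
      nlinarith [grb]
    · -- liminf slope condition
      intro x hx r hr
      have hx0 : (0:ℝ) ≤ x := le_trans hT0 hx.1
      have hxT : T₀ ≤ x := le_trans (le_max_left _ _) hx.1
      have hρx : |ρ x| ≤ ε' := hT₀ x hxT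
      have hW := (hw x hx0).sub_const L
      have hlim := tendsto_slope_abs hW
      set W' := -a * min (w x) b - c * w x + d + ρ x with hW'def
      set S := if 0 < w x - L then W' else if w x - L < 0 then -W' else |W'| with hSdef
      have hd : d = a * min L b + c * L := by linarith
      have hSle : S ≤ -c * |w x - L| + ε' := by
        rcases lt_trichotomy (w x - L) 0 with h0 | h0 | h0
        · rw [hSdef, if_neg (by linarith), if_pos h0, abs_of_neg h0]
          have hmin : min (w x) b ≤ min L b :=
            min_le_min (by linarith) le_rfl
          have h3 : -ε' ≤ ρ x := (abs_le.1 hρx).1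
          nlinarith
        · rw [hSdef, if_neg (by linarith), if_neg (by linarith), h0, abs_zero]
          have hwL : w x = L := by linarith
          rw [hW'def, hwL, hd]
          have : -a * min L b - c * L + (a * min L b + c * L) + ρ x = ρ x := by ring
          rw [this]
          linarith
        · rw [hSdef, if_pos h0, abs_of_pos h0]
          have hmin : min L b ≤ min (w x) b :=
            min_le_min (by linarith) le_rfl
          have h3 : ρ x ≤ ε' := (abs_le.1 hρx).2
          nlinarith
      have hSr : S < r := lt_of_le_of_lt hSle hr
      exact ((hlim.eventually_lt_const hSr).frequently)
    · intro x hx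
      exact le_refl _
  -- conclude
  have hdecay : Tendsto (fun t => δ * Real.exp (-c * (t - T))) atTop (nhds 0) := by
    have h1 : Tendsto (fun t : ℝ => t - T) atTop atTop :=
      tendsto_atTop_add_const_right _ _ tendsto_id
    have h2 : Tendsto (fun t : ℝ => -c * (t - T)) atTop atBot :=
      h1.const_mul_atTop_of_neg (by linarith)
    have h3 := (Real.tendsto_exp_atBot.comp h2).const_mul δ
    simpa using h3
  have hev : ∀ᶠ t in atTop, δ * Real.exp (-c * (t - T)) < ε / 3 :=
    hdecay.eventually_lt_const (by linarith)
  rw [eventually_atTop] at hev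
  obtain ⟨N, hN⟩ := hev
  refine ⟨max N T, fun t ht => ?_⟩
  have h1 := key t (le_trans (le_max_right _ _) ht)
  have h2 := hN t (le_trans (le_max_left _ _) ht)
  rw [Real.dist_eq]
  calc |w t - L| ≤ δ * Real.exp (-c * (t - T)) + ε / 3 := h1
    _ < ε / 3 + ε / 3 := by linarith
    _ < ε := by linarith

theorem ode_min_nonlinearity (a b c d : ℝ) (ha : 0 ≤ a) (hb : 0 ≤ b)
    (hc : 0 < c) (hd : 0 ≤ d) (ρ w : ℝ → ℝ)
    (hρc : Continuous ρ)
    (hρ : Tendsto ρ atTop (nhds 0))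
    (hw0 : 0 < w 0)
    (hw : ∀ t ≥ (0 : ℝ),
      HasDerivAt w (-a * min (w t) b - c * w t + d + ρ t) t) :
    (d / (a + c) ≤ b → Tendsto w atTop (nhds (d / (a + c)))) ∧
    (d / (a + c) > b → Tendsto w atTop (nhds ((d - a * b) / c))) := by
  have hac : 0 < a + c := by linarith
  constructor
  · intro hle
    apply ode_conv_aux a b c d _ ha hc ρ w hρ hw
    rw [min_eq_left hle]
    field_simp
    ring
  · intro hgt
    apply ode_conv_aux a b c d _ ha hc ρ w hρ hw
    have hbL : b ≤ (d - a * b) / c := by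
      rw [le_div_iff₀ hc]
      have : b * (a + c) < d := (lt_div_iff₀ hac).1 hgt
      nlinarith
    rw [min_eq_right hbL]
    field_simp
    ring
end

section
/- Let n ≥ 1 and let A be an n×n real matrix such that every eigenvalue μ ∈ ℂ of A (i.e., every element of the spectrum of the complexification of A) satisfies μ = 0 or Re(μ) < 0. Let z₀ ∈ ℝⁿ and suppose the trajectory t ↦ exp(tA)·z₀ is bounded on [0,∞). Then exp(tA)·z₀ converges to a (finite) limit in ℝⁿ as t → ∞. -/
/-!
Over `ℂ`, every vector is a sum of generalized eigenvectors of the complexification `B` of `A`.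
Along a generalized eigenvector of `μ` the trajectory is `e^{tμ}` times a polynomial in `t`: it
tends to `0` when `Re μ < 0`, and for `μ = 0` it is a plain polynomial. Boundedness of the
trajectory forces this polynomial to be constant, i.e. `B v₀ = 0` for the component `v₀` of `z₀`
in the generalized kernel, so the trajectory converges to `v₀`.
-/

open Filter Finset Nat Topology Matrix

theorem Module.End.mem_spectrum_of_mem_maxGenEigenspace {R M : Type*} [CommRing R]
    [AddCommGroup M] [Module R M] {f : Module.End R M} {μ : R} {v : M}
    (hv : v ∈ f.maxGenEigenspace μ) (hv0 : v ≠ 0) : μ ∈ spectrum R f :=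
  (HasUnifEigenvalue.lt zero_lt_one ((Submodule.ne_bot_iff _).mpr ⟨v, hv, hv0⟩)).mem_spectrum

open Polynomial in
theorem Polynomial.degree_le_zero_of_isBoundedUnder {R α : Type*} [NormedRing R]
    [IsAbsoluteValue (norm : R → ℝ)] {l : Filter α} [l.NeBot] {z : α → R}
    (hz : Tendsto (fun x => ‖z x‖) l atTop) {p : R[X]}
    (hp : IsBoundedUnder (· ≤ ·) l fun x => ‖p.eval (z x)‖) : p.degree ≤ 0 :=
  not_lt.mp fun hdeg => not_isBoundedUnder_of_tendsto_atTop (p.tendsto_norm_atTop hdeg hz) hp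

open Polynomial in
theorem eq_zero_of_isBoundedUnder_sum_pow_smul {ι 𝕜 α : Type*} [Fintype ι] [NormedField 𝕜]
    {l : Filter α} [l.NeBot] {z : α → 𝕜} (hz : Tendsto (fun x => ‖z x‖) l atTop)
    {c : ℕ → ι → 𝕜} {k : ℕ}
    (hb : IsBoundedUnder (· ≤ ·) l fun x => ‖∑ j ∈ range k, z x ^ j • c j‖)
    {j : ℕ} (hj0 : j ≠ 0) (hjk : j < k) : c j = 0 := by
  ext i
  set p : 𝕜[X] := ∑ j ∈ range k, C (c j i) * X ^ j
  have heval : ∀ x, p.eval (z x) = (∑ j ∈ range k, z x ^ j • c j) i := by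
    simp only [p, eval_finsetSum, eval_mul, eval_C, eval_pow, eval_X, Finset.sum_apply,
      Pi.smul_apply, smul_eq_mul, mul_comm, implies_true]
  have hp : p.degree ≤ 0 := by
    refine degree_le_zero_of_isBoundedUnder hz (hb.mono_le (Eventually.of_forall fun x => ?_))
    simpa only [heval] using norm_le_pi_norm _ i
  have hcoeff : p.coeff j = c j i := by simp [p, hjk]
  have hj : (0 : WithBot ℕ) < j := by exact_mod_cast pos_of_ne_zero hj0
  rw [← hcoeff, coeff_eq_zero_of_degree_lt (hp.trans_lt hj)]
  rfl

theorem tendsto_pow_mul_cexp_mul_atTop_nhds_zero {μ : ℂ} (hμ : μ.re < 0) (j : ℕ) :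
    Tendsto (fun t : ℝ => (t : ℂ) ^ j * Complex.exp (t * μ)) atTop (𝓝 0) := by
  rw [tendsto_zero_iff_norm_tendsto_zero]
  refine (tendsto_rpow_mul_exp_neg_mul_atTop_nhds_zero j (-μ.re) (neg_pos.mpr hμ)).congr' ?_
  filter_upwards [eventually_ge_atTop 0] with t ht
  rw [norm_mul, norm_pow, Complex.norm_exp, Complex.norm_real, Real.norm_of_nonneg ht,
    Real.rpow_natCast, Complex.re_ofReal_mul, neg_neg, mul_comm t]

namespace Matrix

variable {m 𝕂 : Type*} [Fintype m] [DecidableEq m] [RCLike 𝕂]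

-- Any algebra norm would do: it only serves to sum the exponential series, while
-- `NormedSpace.exp` itself depends on the topology alone.
attribute [local instance] Matrix.linftyOpNormedRing Matrix.linftyOpNormedAlgebra

theorem exp_mulVec_eq_sum_of_pow_mulVec_eq_zero {N : Matrix m m 𝕂} {v : m → 𝕂} {k : ℕ}
    (hv : N ^ k *ᵥ v = 0) :
    NormedSpace.exp N *ᵥ v = ∑ j ∈ range k, (j ! : 𝕂)⁻¹ • (N ^ j *ᵥ v) := by
  have hsum :
      HasSum (fun j => (j ! : 𝕂)⁻¹ • (N ^ j *ᵥ v)) (NormedSpace.exp N *ᵥ v) := by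
    simp_rw [← smul_mulVec]
    exact (NormedSpace.exp_series_hasSum_exp' (𝕂 := 𝕂) N).map (mulVec.addMonoidHomLeft v)
       (continuous_id.matrix_mulVec continuous_const)
  refine hsum.unique (hasSum_sum_of_ne_finset_zero fun j hj => ?_)
  obtain ⟨i, rfl⟩ := Nat.exists_eq_add_of_le (not_lt.mp (mem_range.not.mp hj))
  rw [add_comm, pow_add, ← mulVec_mulVec, hv, mulVec_zero, smul_zero]

theorem exp_add_smul_one (N : Matrix m m 𝕂) (c : 𝕂) :
    NormedSpace.exp (N + c • 1) = NormedSpace.exp c • NormedSpace.exp N := by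
  have hc : NormedSpace.exp (c • 1 : Matrix m m 𝕂) = NormedSpace.exp c • 1 := by
    simp only [← Algebra.algebraMap_eq_smul_one]
    exact (NormedSpace.algebraMap_exp_comm c).symm
  rw [exp_add_of_commute _ _ ((Commute.one_right N).smul_right c), hc, mul_smul_comm, mul_one]

theorem exp_smul_mulVec_eq_sum_of_pow_mulVec_eq_zero {B : Matrix m m 𝕂} {μ : 𝕂}
    {v : m → 𝕂} {k : ℕ} (hv : (B - μ • 1) ^ k *ᵥ v = 0) (s : 𝕂) :
    NormedSpace.exp (s • B) *ᵥ v = NormedSpace.exp (s * μ) •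
      ∑ j ∈ range k, (j ! : 𝕂)⁻¹ • s ^ j • ((B - μ • 1) ^ j *ᵥ v) := by
  have hdecomp : s • B = s • (B - μ • 1) + (s * μ) • 1 := by
    rw [smul_sub, smul_smul, sub_add_cancel]
  have hsv : (s • (B - μ • 1)) ^ k *ᵥ v = 0 := by rw [smul_pow, smul_mulVec, hv, smul_zero]
  rw [hdecomp, exp_add_smul_one, smul_mulVec, exp_mulVec_eq_sum_of_pow_mulVec_eq_zero hsv]
  simp only [smul_pow, smul_mulVec]

theorem exp_smul_mulVec_of_mulVec_eq_zero {B : Matrix m m 𝕂} {v : m → 𝕂} (hv : B *ᵥ v = 0)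
    (s : 𝕂) : NormedSpace.exp (s • B) *ᵥ v = v := by
  have := exp_smul_mulVec_eq_sum_of_pow_mulVec_eq_zero (μ := 0) (k := 1) (by simpa using hv) s
  simpa using this

theorem exists_pow_sub_smul_mulVec_eq_zero {R : Type*} [CommRing R] {B : Matrix m m R} {μ : R}
    {v : m → R} (hv : v ∈ Module.End.maxGenEigenspace (toLin' B) μ) :
    ∃ k, (B - μ • 1) ^ k *ᵥ v = 0 := by
  obtain ⟨k, hk⟩ := (Module.End.mem_maxGenEigenspace _ _ _).mp hv
  refine ⟨k, ?_⟩
  rwa [← toLin'_apply, toLin'_pow, map_sub, map_smul, toLin'_one]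

theorem tendsto_exp_smul_mulVec_of_mem_maxGenEigenspace {B : Matrix m m ℂ} {μ : ℂ}
    (hμ : μ.re < 0) {v : m → ℂ} (hv : v ∈ Module.End.maxGenEigenspace (toLin' B) μ) :
    Tendsto (fun t : ℝ => NormedSpace.exp ((t : ℂ) • B) *ᵥ v) atTop (𝓝 0) := by
  obtain ⟨k, hk⟩ := exists_pow_sub_smul_mulVec_eq_zero hv
  have hexp : ∀ t : ℝ, NormedSpace.exp ((t : ℂ) • B) *ᵥ v =
      ∑ j ∈ range k, ((t : ℂ) ^ j * Complex.exp (t * μ)) •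
        ((j ! : ℂ)⁻¹ • ((B - μ • 1) ^ j *ᵥ v)) := by
    intro t
    rw [exp_smul_mulVec_eq_sum_of_pow_mulVec_eq_zero hk, ← Complex.exp_eq_exp_ℂ, smul_sum]
    refine sum_congr rfl fun j _ => ?_
    module
  simp_rw [hexp]
  simpa using tendsto_finsetSum (range k) fun j _ =>
    (tendsto_pow_mul_cexp_mul_atTop_nhds_zero hμ j).smul_const
      ((j ! : ℂ)⁻¹ • ((B - μ • 1) ^ j *ᵥ v))

theorem mulVec_eq_zero_of_isBoundedUnder_exp_smul_mulVec {B : Matrix m m ℂ} {v : m → ℂ}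
    (hv : v ∈ Module.End.maxGenEigenspace (toLin' B) 0)
    (hb : IsBoundedUnder (· ≤ ·) atTop fun t : ℝ =>
      ‖NormedSpace.exp ((t : ℂ) • B) *ᵥ v‖) :
    B *ᵥ v = 0 := by
  obtain ⟨k, hk⟩ := exists_pow_sub_smul_mulVec_eq_zero hv
  rw [zero_smul, sub_zero] at hk
  -- With exponent `k + 2` the coefficient of `t` below is `B *ᵥ v`, even when `k ≤ 1`.
  have hk2 : B ^ (k + 2) *ᵥ v = 0 := by
    rw [add_comm, pow_add, ← mulVec_mulVec, hk, mulVec_zero]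
  have hexp : ∀ t : ℝ, NormedSpace.exp ((t : ℂ) • B) *ᵥ v =
      ∑ j ∈ range (k + 2), (t : ℂ) ^ j • ((j ! : ℂ)⁻¹ • (B ^ j *ᵥ v)) := by
    intro t
    rw [exp_smul_mulVec_eq_sum_of_pow_mulVec_eq_zero (μ := 0) (by simpa using hk2)]
    simp only [zero_smul, sub_zero, mul_zero, NormedSpace.exp_zero, one_smul]
    exact sum_congr rfl fun j _ => smul_comm _ _ _
  have hz : Tendsto (fun t : ℝ => ‖(t : ℂ)‖) atTop atTop := by
    simpa only [Complex.norm_real, Real.norm_eq_abs] using tendsto_abs_atTop_atTop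
  simp_rw [hexp] at hb
  simpa using eq_zero_of_isBoundedUnder_sum_pow_smul hz hb one_ne_zero (by omega)

theorem exists_mem_maxGenEigenspace_zero_tendsto_exp_smul_mulVec_sub {B : Matrix m m ℂ}
    (hspec : ∀ μ ∈ spectrum ℂ B, μ = 0 ∨ μ.re < 0) (v : m → ℂ) :
    ∃ v₀ ∈ Module.End.maxGenEigenspace (toLin' B) 0,
      Tendsto (fun t : ℝ => NormedSpace.exp ((t : ℂ) • B) *ᵥ (v - v₀))
        atTop (𝓝 0) := by
  have hv : v ∈ ⨆ μ, Module.End.maxGenEigenspace (toLin' B) μ := by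
    rw [Module.End.iSup_maxGenEigenspace_eq_top]; trivial
  induction hv using Submodule.iSup_induction' with
  | mem μ u hu =>
    by_cases hu0 : u = 0
    · exact ⟨0, zero_mem _, by simp [hu0]⟩
    rcases hspec μ (spectrum_toLin' B ▸ Module.End.mem_spectrum_of_mem_maxGenEigenspace hu hu0)
      with rfl | hμ
    · exact ⟨u, hu, by simp⟩
    · exact ⟨0, zero_mem _,
        by simpa using tendsto_exp_smul_mulVec_of_mem_maxGenEigenspace hμ hu⟩
  | zero => exact ⟨0, zero_mem _, by simp⟩
  | add x y _ _ hx hy =>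
    obtain ⟨x₀, hx₀, hx⟩ := hx
    obtain ⟨y₀, hy₀, hy⟩ := hy
    refine ⟨x₀ + y₀, add_mem hx₀ hy₀, ?_⟩
    simpa [add_sub_add_comm, mulVec_add] using hx.add hy

theorem exists_tendsto_exp_smul_mulVec_of_isBoundedUnder {B : Matrix m m ℂ}
    (hspec : ∀ μ ∈ spectrum ℂ B, μ = 0 ∨ μ.re < 0) {v : m → ℂ}
    (hb : IsBoundedUnder (· ≤ ·) atTop fun t : ℝ =>
      ‖NormedSpace.exp ((t : ℂ) • B) *ᵥ v‖) :
    ∃ L, Tendsto (fun t : ℝ => NormedSpace.exp ((t : ℂ) • B) *ᵥ v) atTop (𝓝 L) := by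
  obtain ⟨v₀, hv₀, hdecay⟩ :=
    exists_mem_maxGenEigenspace_zero_tendsto_exp_smul_mulVec_sub hspec v
  have hb₀ : IsBoundedUnder (· ≤ ·) atTop fun t : ℝ =>
      ‖NormedSpace.exp ((t : ℂ) • B) *ᵥ v₀‖ := by
    refine (isBoundedUnder_le_add hb hdecay.norm.isBoundedUnder_le).mono_le
      (Eventually.of_forall fun t => ?_)
    simpa [mulVec_sub] using norm_sub_le (NormedSpace.exp ((t : ℂ) • B) *ᵥ v)
      (NormedSpace.exp ((t : ℂ) • B) *ᵥ (v - v₀))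
  have hB : B *ᵥ v₀ = 0 := mulVec_eq_zero_of_isBoundedUnder_exp_smul_mulVec hv₀ hb₀
  have hsplit : ∀ t : ℝ, NormedSpace.exp ((t : ℂ) • B) *ᵥ v =
      v₀ + NormedSpace.exp ((t : ℂ) • B) *ᵥ (v - v₀) := by
    intro t
    rw [mulVec_sub, exp_smul_mulVec_of_mulVec_eq_zero hB, add_sub_cancel]
  refine ⟨v₀, ?_⟩
  simp_rw [hsplit]
  simpa using hdecay.const_add v₀

theorem map_exp {R S : Type*} [RCLike R] [NormedRing S] [Algebra ℚ S] (f : R →+* S)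
    (hf : Continuous f) (A : Matrix m m R) :
    (NormedSpace.exp A).map f = NormedSpace.exp (A.map f) :=
  NormedSpace.map_exp f.mapMatrix (continuous_id.matrix_map hf) A

theorem ofReal_exp_smul_mulVec (A : Matrix m m ℝ) (z : m → ℝ) (t : ℝ) :
    (fun i => ((NormedSpace.exp (t • A) *ᵥ z) i : ℂ)) =
      NormedSpace.exp ((t : ℂ) • A.map (algebraMap ℝ ℂ)) *ᵥ fun i => (z i : ℂ) := by
  have hmap : (t • A).map (algebraMap ℝ ℂ) = (t : ℂ) • A.map (algebraMap ℝ ℂ) := by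
    ext
    simp
  ext i
  have := RingHom.map_mulVec (algebraMap ℝ ℂ) (NormedSpace.exp (t • A)) z i
  rwa [map_exp (algebraMap ℝ ℂ) Complex.continuous_ofReal, hmap] at this

end Matrix

theorem norm_fun_ofReal {ι : Type*} [Fintype ι] (x : ι → ℝ) :
    ‖fun i => (x i : ℂ)‖ = ‖x‖ := by
  simp [Pi.norm_def, Complex.nnnorm_real]

theorem bounded_linear_trajectory_converges_general (n : ℕ)
    (A : Matrix (Fin n) (Fin n) ℝ)
    (hspec : ∀ μ ∈ spectrum ℂ (A.map (algebraMap ℝ ℂ)), μ = 0 ∨ μ.re < 0)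
    (z0 : Fin n → ℝ)
    (hbdd : ∃ C : ℝ, ∀ t ≥ (0 : ℝ),
      ‖(NormedSpace.exp (t • A)).mulVec z0‖ ≤ C) :
    ∃ L : Fin n → ℝ,
      Tendsto (fun t : ℝ => (NormedSpace.exp (t • A)).mulVec z0) atTop (nhds L) := by
  obtain ⟨C, hC⟩ := hbdd
  have hb : IsBoundedUnder (· ≤ ·) atTop fun t : ℝ =>
      ‖NormedSpace.exp ((t : ℂ) • A.map (algebraMap ℝ ℂ)) *ᵥ fun i => (z0 i : ℂ)‖ :=
    ⟨C, eventually_map.mpr <| (eventually_ge_atTop 0).mono fun t ht => by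
      rw [← Matrix.ofReal_exp_smul_mulVec, norm_fun_ofReal]; exact hC t ht⟩
  obtain ⟨L, hL⟩ := Matrix.exists_tendsto_exp_smul_mulVec_of_isBoundedUnder hspec hb
  have hre := ((continuous_pi fun i => Complex.continuous_re.comp (continuous_apply i)).tendsto
    L).comp hL
  refine ⟨fun i => (L i).re, hre.congr fun t => funext fun i => ?_⟩
  simp only [Function.comp_apply, ← Matrix.ofReal_exp_smul_mulVec, Complex.ofReal_re]

theorem bounded_linear_trajectory_converges (n : ℕ) (hn : 1 ≤ n)
    (A : Matrix (Fin n) (Fin n) ℝ)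
    (hspec : ∀ μ ∈ spectrum ℂ (A.map (algebraMap ℝ ℂ)), μ = 0 ∨ μ.re < 0)
    (z0 : Fin n → ℝ)
    (hbdd : ∃ C : ℝ, ∀ t ≥ (0 : ℝ),
      ‖(NormedSpace.exp (t • A)).mulVec z0‖ ≤ C) :
    ∃ L : Fin n → ℝ,
      Tendsto (fun t : ℝ => (NormedSpace.exp (t • A)).mulVec z0) atTop (nhds L) :=
  bounded_linear_trajectory_converges_general n A hspec z0 hbdd
end
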